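/- Let α ∈ ℝ^{m1}⊗ℝ^{m2} be represented by the matrix A ∈ ℝ^{m1×m2} and let 1 ≤ i ≤ m1. Then a subspace U ∈ Gr(i,ℝ^{m1}) is a critical point of the function X ↦ ‖P_{X⊗ℝ^{m2}}(α)‖² on the Grassmannian Gr(i,ℝ^{m1}) if and only if U is spanned by i left singular vectors of A (equivalently, U is an invariant subspace of AA^⊤). -/

import Mathlib

/-!
For an orthonormal frame `x` of `X`, the tensors `x l ⊗ e k` form an orthonormal basis of
`X ⊗ ℝ^{m₂}`, so `‖P_{X⊗ℝ^{m₂}} α‖² = ∑ l, ⟪x l, A Aᵀ x l⟫` and, along a curve of frames, the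
derivative is `2 ∑ l, ⟪x l', A Aᵀ x l⟫`.

If `U` is critical, rotating one frame vector `x l` towards a unit vector `v ⊥ U` gives
`⟪v, A Aᵀ x l⟫ = 0`, so `U` is `A Aᵀ`-invariant. Conversely, if `U` is invariant, expanding
`A Aᵀ x l` in the frame turns the derivative into `∑ B l' l * S l l'` with `B` symmetric
(`A Aᵀ` is symmetric) and `S` skew-symmetric (differentiate `⟪x a, x b⟫ = δ a b`), which vanishes.
Finally, by the spectral theorem for the restriction of `A Aᵀ` to `U`, the invariant subspaces
are exactly the spans of eigenvectors.
-/

open Matrix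

/-- The elementary tensor `x ⊗ y` in `EuclideanSpace ℝ (Fin m₁ × Fin m₂)`. -/
noncomputable def tprod2 {m₁ m₂ : ℕ}
    (x : EuclideanSpace ℝ (Fin m₁)) (y : EuclideanSpace ℝ (Fin m₂)) :
    EuclideanSpace ℝ (Fin m₁ × Fin m₂) :=
  WithLp.toLp 2 (fun p => x p.1 * y p.2)

/-- The subspace `X ⊗ Y` of `ℝ^{m₁×m₂}`. -/
noncomputable def tensorSub2 {m₁ m₂ : ℕ}
    (X : Submodule ℝ (EuclideanSpace ℝ (Fin m₁)))
    (Y : Submodule ℝ (EuclideanSpace ℝ (Fin m₂))) :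
    Submodule ℝ (EuclideanSpace ℝ (Fin m₁ × Fin m₂)) :=
  Submodule.span ℝ {T | ∃ x ∈ X, ∃ y ∈ Y, T = tprod2 x y}

/-- `‖P_{X ⊗ ℝ^{m₂}}(α)‖²` as a function of the subspace `X`. -/
noncomputable def projNormSq {m₁ m₂ : ℕ} (α : EuclideanSpace ℝ (Fin m₁ × Fin m₂))
    (X : Submodule ℝ (EuclideanSpace ℝ (Fin m₁))) : ℝ :=
  ‖(Submodule.orthogonalProjection (tensorSub2 X (⊤ : Submodule ℝ (EuclideanSpace ℝ (Fin m₂)))) α :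
      EuclideanSpace ℝ (Fin m₁ × Fin m₂))‖ ^ 2

open Submodule Set RealInnerProductSpace

section InnerProductSpace

variable {E : Type*} [NormedAddCommGroup E] [InnerProductSpace ℝ E] {ι : Type*}

theorem starProjection_span_orthonormal [Fintype ι] [DecidableEq ι] {v : ι → E}
    (hv : Orthonormal ℝ v) [(span ℝ (range v)).HasOrthogonalProjection] (x : E) :
    (span ℝ (range v)).starProjection x = ∑ j, ⟪v j, x⟫ • v j := by
  apply eq_starProjection_of_mem_of_inner_eq_zero
  · exact Submodule.sum_mem _ fun j _ => smul_mem _ _ (subset_span (mem_range_self j))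
  intro w hw
  induction hw using span_induction with
  | mem w hw =>
    obtain ⟨j, rfl⟩ := hw
    rw [inner_sub_left, sub_eq_zero, hv.inner_left_fintype, conj_trivial, real_inner_comm]
  | zero => simp
  | add x y _ _ hx hy => rw [inner_add_right, hx, hy, add_zero]
  | smul a x _ hx => rw [inner_smul_right, hx, mul_zero]

theorem norm_starProjection_sq_of_orthonormal [Fintype ι] {K : Submodule ℝ E}
    [K.HasOrthogonalProjection] {v : ι → E} (hv : Orthonormal ℝ v) (hK : span ℝ (range v) = K)
    (x : E) :
    ‖K.starProjection x‖ ^ 2 = ∑ j, ⟪v j, x⟫ ^ 2 := by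
  classical
  subst hK
  rw [starProjection_span_orthonormal hv, ← real_inner_self_eq_norm_sq, hv.inner_sum]
  simp [sq]

theorem sum_inner_smul_eq_of_mem_span [Fintype ι] {v : ι → E} (hv : Orthonormal ℝ v) {y : E}
    (hy : y ∈ span ℝ (range v)) : ∑ j, ⟪v j, y⟫ • v j = y := by
  classical
  have := FiniteDimensional.span_of_finite ℝ (finite_range v)
  rw [← starProjection_span_orthonormal hv, starProjection_eq_self_iff.mpr hy]

theorem apply_mem_span_of_forall {T : E →ₗ[ℝ] E} {S : Set E} (hS : ∀ s ∈ S, T s ∈ span ℝ S) :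
    ∀ x ∈ span ℝ S, T x ∈ span ℝ S :=
  fun _ hx => (span_le (p := (span ℝ S).comap T)).mpr hS hx

theorem OrthonormalBasis.orthonormal_coe [Fintype ι] {U : Submodule ℝ E}
    (b : OrthonormalBasis ι ℝ U) :
    Orthonormal ℝ fun l => (b l : E) :=
  b.orthonormal.comp_linearIsometry U.subtypeₗᵢ

theorem Module.Basis.span_range_coe {U : Submodule ℝ E} (b : Module.Basis ι ℝ U) :
    span ℝ (range fun l => (b l : E)) = U := by
  rw [show (range fun l => (b l : E)) = U.subtype '' range b from range_comp U.subtype b,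
    span_image, b.span_eq, Submodule.map_top, range_subtype]

theorem HasDerivAt.inner_apply_self {T : E →L[ℝ] E} (hT : (T : E →ₗ[ℝ] E).IsSymmetric)
    {c : ℝ → E} {c' : E} {t : ℝ} (hc : HasDerivAt c c' t) :
    HasDerivAt (fun s => ⟪c s, T (c s)⟫) (2 * ⟪c', T (c t)⟫) t := by
  refine (hc.inner ℝ (T.hasFDerivAt.comp_hasDerivAt t hc)).congr_deriv ?_
  have := hT (c t) c'
  simp only [ContinuousLinearMap.coe_coe] at this
  rw [Function.comp_apply, ← this, real_inner_comm (T (c t))]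
  ring

theorem deriv_sum_inner_apply_self [Fintype ι] {T : E →L[ℝ] E}
    (hT : (T : E →ₗ[ℝ] E).IsSymmetric) {c : ℝ → ι → E} {t : ℝ}
    (hc : ∀ l, DifferentiableAt ℝ (fun s => c s l) t) :
    deriv (fun s => ∑ l, ⟪c s l, T (c s l)⟫) t
      = 2 * ∑ l, ⟪deriv (fun s => c s l) t, T (c t l)⟫ := by
  rw [Finset.mul_sum]
  exact (HasDerivAt.fun_sum fun l _ => (hc l).hasDerivAt.inner_apply_self hT).deriv

theorem inner_deriv_add_inner_deriv_eq_zero {c : ℝ → ι → E} {t : ℝ}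
    (horth : ∀ s, Orthonormal ℝ (c s)) {a b : ι}
    (ha : DifferentiableAt ℝ (fun s => c s a) t) (hb : DifferentiableAt ℝ (fun s => c s b) t) :
    ⟪deriv (fun s => c s a) t, c t b⟫ + ⟪c t a, deriv (fun s => c s b) t⟫ = 0 := by
  classical
  have hconst : (fun s => ⟪c s a, c s b⟫) = fun _ => if a = b then (1 : ℝ) else 0 :=
    funext fun s => orthonormal_iff_ite.mp (horth s) a b
  have := (ha.hasDerivAt.inner ℝ hb.hasDerivAt).deriv
  rw [hconst, deriv_const] at this
  linarith

theorem Finset.sum_sum_mul_eq_zero_of_symm_of_antisymm {B S : ι → ι → ℝ} (s : Finset ι)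
    (hB : ∀ a b, B a b = B b a) (hS : ∀ a b, S a b = -S b a) :
    ∑ a ∈ s, ∑ b ∈ s, B a b * S a b = 0 := by
  have : ∑ a ∈ s, ∑ b ∈ s, B a b * S a b = -∑ a ∈ s, ∑ b ∈ s, B a b * S a b := by
    conv_lhs => rw [Finset.sum_comm]
    rw [← Finset.sum_neg_distrib]
    refine Finset.sum_congr rfl fun a _ => ?_
    rw [← Finset.sum_neg_distrib]
    refine Finset.sum_congr rfl fun b _ => ?_
    rw [hB b a, hS b a]
    ring
  linarith

theorem sum_inner_deriv_apply_eq_zero_of_invariant [Fintype ι] {T : E →L[ℝ] E}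
    (hT : (T : E →ₗ[ℝ] E).IsSymmetric) {c : ℝ → ι → E} {t : ℝ}
    (hc : ∀ l, DifferentiableAt ℝ (fun s => c s l) t) (horth : ∀ s, Orthonormal ℝ (c s))
    (hinv : ∀ x ∈ span ℝ (range (c t)), T x ∈ span ℝ (range (c t))) :
    ∑ l, ⟪deriv (fun s => c s l) t, T (c t l)⟫ = 0 := by
  set d := fun l => deriv (fun s => c s l) t
  have hexpand : ∀ l, T (c t l) = ∑ l', ⟪c t l', T (c t l)⟫ • c t l' := fun l =>
    (sum_inner_smul_eq_of_mem_span (horth t) (hinv _ (subset_span (mem_range_self l)))).symm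
  calc ∑ l, ⟪d l, T (c t l)⟫
      = ∑ l, ∑ l', ⟪c t l', T (c t l)⟫ * ⟪d l, c t l'⟫ := by
        refine Finset.sum_congr rfl fun l _ => ?_
        conv_lhs => rw [hexpand l]
        simp only [inner_sum, real_inner_smul_right]
    _ = 0 := by
        refine Finset.sum_sum_mul_eq_zero_of_symm_of_antisymm _ (fun a b => ?_) fun a b => ?_
        · have := hT (c t b) (c t a)
          simp only [ContinuousLinearMap.coe_coe] at this
          rw [← this, real_inner_comm]
        · have := inner_deriv_add_inner_deriv_eq_zero horth (hc a) (hc b)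
          rw [real_inner_comm _ (c t a)] at this
          linarith

theorem Orthonormal.update [DecidableEq ι] {u : ι → E} (hu : Orthonormal ℝ u) {l₀ : ι} {w : E}
    (hw : ‖w‖ = 1) (hwu : ∀ l ≠ l₀, ⟪u l, w⟫ = 0) : Orthonormal ℝ (Function.update u l₀ w) := by
  rw [orthonormal_iff_ite] at hu ⊢
  intro a b
  by_cases ha : a = l₀ <;> by_cases hb : b = l₀
  · simp [ha, hb, hw]
  · rw [ha, Function.update_self, Function.update_of_ne hb, real_inner_comm, hwu b hb,
      if_neg (Ne.symm hb)]
  · rw [hb, Function.update_self, Function.update_of_ne ha, hwu a ha, if_neg ha]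
  · rw [Function.update_of_ne ha, Function.update_of_ne hb, hu]

noncomputable def rotateFrame [DecidableEq ι] (u : ι → E) (l₀ : ι) (v : E) (t : ℝ) : ι → E :=
  Function.update u l₀ (Real.cos t • u l₀ + Real.sin t • v)

section rotateFrame

variable [DecidableEq ι] {u : ι → E} {l₀ : ι} {v : E}

@[simp]
theorem rotateFrame_zero : rotateFrame u l₀ v 0 = u := by
  simp [rotateFrame]

theorem orthonormal_rotateFrame (hu : Orthonormal ℝ u) (hv : ‖v‖ = 1) (hvu : ∀ l, ⟪u l, v⟫ = 0)
    (t : ℝ) : Orthonormal ℝ (rotateFrame u l₀ v t) := by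
  refine hu.update ?_ fun l hl => ?_
  · have hsq : ‖Real.cos t • u l₀ + Real.sin t • v‖ ^ 2 = 1 := by
      rw [norm_add_sq_real, norm_smul, norm_smul, real_inner_smul_left, real_inner_smul_right,
        hvu, hu.norm_eq_one, hv, Real.norm_eq_abs, Real.norm_eq_abs, mul_pow, mul_pow, sq_abs,
        sq_abs]
      simp [Real.cos_sq_add_sin_sq]
    exact (pow_eq_one_iff_of_nonneg (norm_nonneg _) two_ne_zero).mp hsq
  · rw [inner_add_right, real_inner_smul_right, real_inner_smul_right, hu.inner_eq_zero hl, hvu,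
      mul_zero, mul_zero, add_zero]

theorem hasDerivAt_rotateFrame (l : ι) (t : ℝ) :
    HasDerivAt (fun s => rotateFrame u l₀ v s l)
      ((Pi.single l₀ (-Real.sin t • u l₀ + Real.cos t • v) : ι → E) l) t := by
  rcases eq_or_ne l l₀ with rfl | hl
  · simpa [rotateFrame] using
      ((Real.hasDerivAt_cos t).smul_const (u l)).fun_add ((Real.hasDerivAt_sin t).smul_const v)
  · simpa [rotateFrame, Function.update_of_ne hl, Pi.single_eq_of_ne hl] using
      hasDerivAt_const t (u l)

end rotateFrame

/-- Criticality of `U` for `X ↦ tr (T|_X) = ∑ l, ⟪x l, T (x l)⟫` (`x` an orthonormal frame of `X`)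
on the Grassmannian, tested along differentiable curves of orthonormal frames through `U`. -/
def IsTraceCritical (T : E →L[ℝ] E) (ι : Type*) [Fintype ι] (U : Submodule ℝ E) : Prop :=
  ∀ c : ℝ → ι → E, (∀ l, Differentiable ℝ fun t => c t l) → (∀ t, Orthonormal ℝ (c t)) →
    span ℝ (range (c 0)) = U → deriv (fun t => ∑ l, ⟪c t l, T (c t l)⟫) 0 = 0

theorem IsTraceCritical.inner_apply_eq_zero [Fintype ι] {T : E →L[ℝ] E}
    (hT : (T : E →ₗ[ℝ] E).IsSymmetric) {U : Submodule ℝ E} (hcrit : IsTraceCritical T ι U)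
    {u : ι → E} (hu : Orthonormal ℝ u) (hspan : span ℝ (range u) = U) (l₀ : ι) {v : E}
    (hv : v ∈ Uᗮ) : ⟪v, T (u l₀)⟫ = 0 := by
  classical
  have hunit : ∀ v ∈ Uᗮ, ‖v‖ = 1 → ⟪v, T (u l₀)⟫ = 0 := by
    intro v hv hv1
    have hvu : ∀ l, ⟪u l, v⟫ = 0 := fun l =>
      inner_right_of_mem_orthogonal (hspan ▸ subset_span (mem_range_self l)) hv
    have hderiv := hasDerivAt_rotateFrame (u := u) (l₀ := l₀) (v := v)
    have hdiff : ∀ l, Differentiable ℝ fun t => rotateFrame u l₀ v t l :=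
      fun l t => (hderiv l t).differentiableAt
    have := hcrit _ hdiff (orthonormal_rotateFrame hu hv1 hvu) (by rw [rotateFrame_zero, hspan])
    rw [deriv_sum_inner_apply_self hT fun l => hdiff l 0] at this
    rw [Finset.sum_eq_single l₀ (fun l _ hl => by simp [(hderiv l 0).deriv, hl]) (by simp)]
      at this
    simpa [(hderiv l₀ 0).deriv] using this
  rcases eq_or_ne v 0 with rfl | hv0
  · exact inner_zero_left _
  have := hunit _ (smul_mem _ ‖v‖⁻¹ hv) (norm_smul_inv_norm hv0)
  rwa [real_inner_smul_left, mul_eq_zero, or_iff_right (inv_ne_zero (norm_ne_zero_iff.mpr hv0))]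
    at this

theorem isTraceCritical_iff_invariant [Fintype ι] {T : E →L[ℝ] E}
    (hT : (T : E →ₗ[ℝ] E).IsSymmetric) {U : Submodule ℝ E} [FiniteDimensional ℝ U]
    (hU : Module.finrank ℝ U = Fintype.card ι) :
    IsTraceCritical T ι U ↔ ∀ x ∈ U, T x ∈ U := by
  constructor
  · intro hcrit
    let b := (stdOrthonormalBasis ℝ U).reindex (Fintype.equivFinOfCardEq hU.symm).symm
    have hspan : span ℝ (range fun l => (b l : E)) = U := b.toBasis.span_range_coe
    rw [← hspan]
    refine apply_mem_span_of_forall (T := (T : E →ₗ[ℝ] E)) ?_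
    rintro _ ⟨l, rfl⟩
    rw [hspan]
    exact (orthogonal_orthogonal U).le <| (mem_orthogonal _ _).mpr fun v hv =>
      hcrit.inner_apply_eq_zero hT b.orthonormal_coe hspan l hv
  · intro hinv c hdiff horth hspan
    rw [deriv_sum_inner_apply_self hT fun l => hdiff l 0,
      sum_inner_deriv_apply_eq_zero_of_invariant hT (fun l => hdiff l 0) horth (hspan ▸ hinv),
      mul_zero]

theorem invariant_iff_exists_eigenvectors [Fintype ι] {T : E →ₗ[ℝ] E} (hT : T.IsSymmetric)
    {U : Submodule ℝ E} [FiniteDimensional ℝ U] (hU : Module.finrank ℝ U = Fintype.card ι) :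
    (∀ x ∈ U, T x ∈ U) ↔ ∃ w : ι → E, LinearIndependent ℝ w ∧
      (∀ l, ∃ μ : ℝ, T (w l) = μ • w l) ∧ span ℝ (range w) = U := by
  constructor
  · intro hinv
    have hTU := hT.restrict_invariant hinv
    let b := (hTU.eigenvectorBasis rfl).reindex (Fintype.equivFinOfCardEq hU.symm).symm
    refine ⟨fun l => (b l : E), b.orthonormal_coe.linearIndependent, fun l => ?_,
      b.toBasis.span_range_coe⟩
    refine ⟨hTU.eigenvalues rfl (Fintype.equivFinOfCardEq hU.symm l), ?_⟩
    simpa only [b, OrthonormalBasis.reindex_apply, Equiv.symm_symm, LinearMap.coe_restrict_apply,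
      Submodule.coe_smul, RCLike.ofReal_real_eq_id, id] using
      congrArg Subtype.val (hTU.apply_eigenvectorBasis rfl _)
  · rintro ⟨w, -, hw, rfl⟩
    refine apply_mem_span_of_forall ?_
    rintro _ ⟨l, rfl⟩
    obtain ⟨μ, hμ⟩ := hw l
    rw [hμ]
    exact smul_mem _ μ (subset_span (mem_range_self l))

end InnerProductSpace

section TensorProduct

variable {m₁ m₂ : ℕ} {ι κ : Type*}

noncomputable def tprod2Bilin :
    EuclideanSpace ℝ (Fin m₁) →ₗ[ℝ] EuclideanSpace ℝ (Fin m₂) →ₗ[ℝ]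
      EuclideanSpace ℝ (Fin m₁ × Fin m₂) :=
  LinearMap.mk₂ ℝ tprod2
    (fun _ _ _ => PiLp.ext fun _ => add_mul _ _ _)
    (fun _ _ _ => PiLp.ext fun _ => mul_assoc _ _ _)
    (fun _ _ _ => PiLp.ext fun _ => mul_add _ _ _)
    (fun _ _ _ => PiLp.ext fun _ => mul_left_comm _ _ _)

theorem tensorSub2_eq_map₂ (X : Submodule ℝ (EuclideanSpace ℝ (Fin m₁)))
    (Y : Submodule ℝ (EuclideanSpace ℝ (Fin m₂))) :
    tensorSub2 X Y = map₂ tprod2Bilin X Y := by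
  rw [map₂_eq_span_image2, tensorSub2]
  congr 1
  ext T
  simp [Set.image2, eq_comm, tprod2Bilin]

theorem tensorSub2_span_span (x : ι → EuclideanSpace ℝ (Fin m₁))
    (y : κ → EuclideanSpace ℝ (Fin m₂)) :
    tensorSub2 (span ℝ (range x)) (span ℝ (range y))
      = span ℝ (range fun q : ι × κ => tprod2 (x q.1) (y q.2)) := by
  rw [tensorSub2_eq_map₂, map₂_span_span, image2_range]
  rfl

theorem inner_tprod2 (x x' : EuclideanSpace ℝ (Fin m₁)) (y y' : EuclideanSpace ℝ (Fin m₂)) :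
    ⟪tprod2 x y, tprod2 x' y'⟫ = ⟪x, x'⟫ * ⟪y, y'⟫ := by
  simp only [tprod2, PiLp.inner_apply, RCLike.inner_apply, conj_trivial]
  rw [Fintype.sum_prod_type, Finset.sum_mul_sum]
  exact Finset.sum_congr rfl fun j _ => Finset.sum_congr rfl fun k _ => by ring

theorem Orthonormal.tprod2 {x : ι → EuclideanSpace ℝ (Fin m₁)}
    {y : κ → EuclideanSpace ℝ (Fin m₂)} (hx : Orthonormal ℝ x) (hy : Orthonormal ℝ y) :
    Orthonormal ℝ fun q : ι × κ => tprod2 (x q.1) (y q.2) := by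
  classical
  rw [orthonormal_iff_ite] at hx hy ⊢
  rintro ⟨a, b⟩ ⟨a', b'⟩
  simp only [inner_tprod2, hx, hy, Prod.mk.injEq, ite_zero_mul_ite_zero, mul_one]

theorem inner_tprod2_of_matrix {A : Matrix (Fin m₁) (Fin m₂) ℝ}
    {α : EuclideanSpace ℝ (Fin m₁ × Fin m₂)} (hα : ∀ p, α p = A p.1 p.2)
    (x : EuclideanSpace ℝ (Fin m₁)) (y : EuclideanSpace ℝ (Fin m₂)) :
    ⟪tprod2 x y, α⟫ = (Aᵀ *ᵥ x) ⬝ᵥ y := by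
  simp only [tprod2, PiLp.inner_apply, RCLike.inner_apply, conj_trivial, hα,
    Fintype.sum_prod_type, dotProduct, mulVec, transpose_apply, Finset.sum_mul]
  rw [Finset.sum_comm]
  exact Finset.sum_congr rfl fun k _ => Finset.sum_congr rfl fun j _ => by ring

theorem projNormSq_span_orthonormal {A : Matrix (Fin m₁) (Fin m₂) ℝ}
    {α : EuclideanSpace ℝ (Fin m₁ × Fin m₂)} (hα : ∀ p, α p = A p.1 p.2)
    {x : ι → EuclideanSpace ℝ (Fin m₁)} [Fintype ι] (hx : Orthonormal ℝ x) :
    projNormSq α (span ℝ (range x)) = ∑ l, ⟪x l, toEuclideanCLM (𝕜 := ℝ) (A * Aᵀ) (x l)⟫ := by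
  let e := EuclideanSpace.basisFun (Fin m₂) ℝ
  have htop : span ℝ (range e) = ⊤ := e.toBasis.span_eq
  have := norm_starProjection_sq_of_orthonormal (hx.tprod2 e.orthonormal)
    (by rw [← tensorSub2_span_span, htop]) α
  rw [projNormSq, coe_orthogonalProjectionOnto_apply, this, Fintype.sum_prod_type]
  refine Finset.sum_congr rfl fun l _ => ?_
  simp only [inner_tprod2_of_matrix hα, e, EuclideanSpace.basisFun_apply, inner_toEuclideanCLM,
    PiLp.ofLp_single, dotProduct_single, mul_one]
  rw [← mulVec_mulVec, dotProduct_mulVec, ← mulVec_transpose]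
  simp only [dotProduct, sq]

end TensorProduct

theorem toEuclideanCLM_apply_eq_smul_iff {n : Type*} [Fintype n] [DecidableEq n]
    (M : Matrix n n ℝ) (x : EuclideanSpace ℝ n) (μ : ℝ) :
    toEuclideanCLM (𝕜 := ℝ) M x = μ • x ↔ M *ᵥ x = μ • x := by
  rw [← (WithLp.ofLp_injective 2).eq_iff, ofLp_toEuclideanCLM, WithLp.ofLp_smul]

theorem grassmannian_critical_iff_singular_vectors_general (m₁ m₂ i : ℕ)
    (A : Matrix (Fin m₁) (Fin m₂) ℝ)
    (α : EuclideanSpace ℝ (Fin m₁ × Fin m₂)) (hα : ∀ p, α p = A p.1 p.2)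
    (U : Submodule ℝ (EuclideanSpace ℝ (Fin m₁))) (hU : Module.finrank ℝ U = i) :
    (∀ c : ℝ → (Fin i → EuclideanSpace ℝ (Fin m₁)),
      (∀ l j, Differentiable ℝ fun t => c t l j) →
      (∀ t, Orthonormal ℝ (c t)) →
      Submodule.span ℝ (Set.range (c 0)) = U →
      deriv (fun t => projNormSq α (Submodule.span ℝ (Set.range (c t)))) 0 = 0) ↔
    (∃ w : Fin i → EuclideanSpace ℝ (Fin m₁),
      LinearIndependent ℝ w ∧
      (∀ l, ∃ μ : ℝ, (A * Aᵀ).mulVec (w l) = μ • w l) ∧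
      Submodule.span ℝ (Set.range w) = U) := by
  have hT : (toEuclideanCLM (𝕜 := ℝ) (A * Aᵀ) : EuclideanSpace ℝ (Fin m₁) →ₗ[ℝ] _).IsSymmetric := by
    rw [coe_toEuclideanCLM_eq_toEuclideanLin, isSymmetric_toEuclideanLin_iff]
    simpa using isHermitian_mul_conjTranspose_self A
  have hU' : Module.finrank ℝ U = Fintype.card (Fin i) := by rw [hU, Fintype.card_fin]
  trans IsTraceCritical (toEuclideanCLM (𝕜 := ℝ) (A * Aᵀ)) (Fin i) U
  · refine forall_congr' fun c => imp_congr (forall_congr' fun _ => (differentiable_piLp 2).symm)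
      (forall_congr' fun horth => ?_)
    simp only [projNormSq_span_orthonormal hα, horth]
  rw [isTraceCritical_iff_invariant hT hU']
  refine (invariant_iff_exists_eigenvectors hT hU').trans ?_
  simp only [ContinuousLinearMap.coe_coe, toEuclideanCLM_apply_eq_smul_iff]

/-- `U ∈ Gr(i,ℝ^{m₁})` is a critical point of `X ↦ ‖P_{X⊗ℝ^{m₂}}(α)‖²` on the
Grassmannian (criticality tested along differentiable curves of orthonormal frames) iff
`U` is spanned by `i` left singular vectors of `A`, i.e. by `i` linearly independent
eigenvectors of `A Aᵀ`. -/
theorem grassmannian_critical_iff_singular_vectors (m₁ m₂ i : ℕ) (hi : 1 ≤ i) (him : i ≤ m₁)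
    (A : Matrix (Fin m₁) (Fin m₂) ℝ)
    (α : EuclideanSpace ℝ (Fin m₁ × Fin m₂)) (hα : ∀ p, α p = A p.1 p.2)
    (U : Submodule ℝ (EuclideanSpace ℝ (Fin m₁))) (hU : Module.finrank ℝ U = i) :
    (∀ c : ℝ → (Fin i → EuclideanSpace ℝ (Fin m₁)),
      (∀ l j, Differentiable ℝ fun t => c t l j) →
      (∀ t, Orthonormal ℝ (c t)) →
      Submodule.span ℝ (Set.range (c 0)) = U →
      deriv (fun t => projNormSq α (Submodule.span ℝ (Set.range (c t)))) 0 = 0) ↔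
    (∃ w : Fin i → EuclideanSpace ℝ (Fin m₁),
      LinearIndependent ℝ w ∧
      (∀ l, ∃ μ : ℝ, (A * Aᵀ).mulVec (w l) = μ • w l) ∧
      Submodule.span ℝ (Set.range w) = U) :=
  grassmannian_critical_iff_singular_vectors_general m₁ m₂ i A α hα U hU
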